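/- Let A and B be PASs over Set, and let G and H be combinatorially complete sets of nonempty subsets of A and B respectively. Equip A × B with the coordinatewise partial application, and for sets S, T of subsets of A, B write S×T = {U × V | U ∈ S, V ∈ T}. Then ⟨⟨G⟩×⟨H⟩⟩ = ⟨G×H⟩ as filters on A × B. -/

import Mathlib

open CategoryTheory

namespace PcaPaper

/-- A partial binary application on `A`. -/
abbrev PApp (A : Type) := A → A → Option A

variable {A B C : Type}

/-- Definedness of the application of inhabited subsets. -/
def SubDef (app : PApp A) (U V : Set A) : Prop :=
  ∀ a ∈ U, ∀ b ∈ V, (app a b).isSome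

/-- Application of subsets. -/
def SubApp (app : PApp A) (U V : Set A) : Set A :=
  {c | ∃ a ∈ U, ∃ b ∈ V, app a b = some c}

/-- Terms with `n` variables, built from variables by application. -/
inductive Term (n : ℕ) : Type
  | var : Fin n → Term n
  | op : Term n → Term n → Term n

/-- Evaluation of a term at a vector of elements, as a partial function. -/
def Term.eval (app : PApp A) : {n : ℕ} → Term n → (Fin n → A) → Option A
  | _, .var i, ρ => some (ρ i)
  | _, .op s t, ρ => (Term.eval app s ρ).bind fun x => (Term.eval app t ρ).bind fun y => app x y

/-- Evaluation of a term at a vector of subsets. -/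
def Term.subEval (app : PApp A) : {n : ℕ} → Term n → (Fin n → Set A) → Set A
  | _, .var i, ρ => ρ i
  | _, .op s t, ρ => SubApp app (Term.subEval app s ρ) (Term.subEval app t ρ)

/-- Definedness of the evaluation of a term at a vector of subsets. -/
def Term.subDef (app : PApp A) : {n : ℕ} → Term n → (Fin n → Set A) → Prop
  | _, .var _, _ => True
  | _, .op s t, ρ => Term.subDef app s ρ ∧ Term.subDef app t ρ ∧
      SubDef app (Term.subEval app s ρ) (Term.subEval app t ρ)

/-- `r · a 0 · … · a (k-1)`, associated to the left. -/
def appVec (app : PApp A) (r : A) : (k : ℕ) → (Fin k → A) → Option A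
  | 0, _ => some r
  | k + 1, a => (appVec app r k fun i => a i.castSucc).bind fun s => app s (a (Fin.last k))

/-- `U` realizes `λ x₀ … xₙ. t`. -/
def Realizes (app : PApp A) (U : Set A) {n : ℕ} (t : Term (n + 1)) : Prop :=
  ∀ r ∈ U, ∀ a : Fin (n + 1) → A,
    (appVec app r n fun i => a i.castSucc).isSome ∧
    ∀ b, Term.eval app t a = some b → appVec app r (n + 1) a = some b

/-- A filter of inhabited subsets on a partial applicative structure. -/
structure IsPcaFilter (app : PApp A) (φ : Set (Set A)) : Prop where
  nonempty : ∀ U ∈ φ, U.Nonempty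
  upward : ∀ U ∈ φ, ∀ V : Set A, U ⊆ V → V ∈ φ
  appClosed : ∀ U ∈ φ, ∀ V ∈ φ, SubDef app U V → SubApp app U V ∈ φ

/-- Combinatorial completeness of a set of subsets. -/
def CombComplete (app : PApp A) (G : Set (Set A)) : Prop :=
  ∀ (n : ℕ) (t : Term (n + 1)), ∃ U ∈ G, Realizes app U t

/-- The least filter containing `G`. -/
def genFilter (app : PApp A) (G : Set (Set A)) : Set (Set A) :=
  ⋂₀ {ψ | IsPcaFilter app ψ ∧ G ⊆ ψ}

/-- A (relative) PCA over the base category `Set`: a nonempty set with a partial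
binary application and a combinatorially complete filter of inhabited subsets. -/
structure PCA (A : Type) where
  app : PApp A
  nonemptyCarrier : Nonempty A
  filt : Set (Set A)
  isFilter : IsPcaFilter app filt
  complete : CombComplete app filt

/- ### Helper lemmas -/

lemma isSome_bind_left {α β : Type} {o : Option α} {f : α → Option β}
    (h : (o.bind f).isSome) : o.isSome := by
  cases o <;> simp_all

lemma appVec_two_pre (app : PApp A) (r u v x : A) :
    (appVec app r 2 fun i => (![u, v, x] : Fin 3 → A) i.castSucc)
      = (app r u).bind fun s => app s v := rfl

lemma appVec_three_cons (app : PApp A) (r u v x : A) :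
    appVec app r (2 + 1) ![u, v, x]
      = ((app r u).bind fun s => app s v).bind fun s => app s x := rfl

lemma eval_comp_term (app : PApp A) (u v x : A) :
    Term.eval app (Term.op (.var 1) (.op (.var 0) (.var 2))) ![u, v, x]
      = (app u x).bind fun y => app v y := by
  simp [Term.eval]

lemma eval_app2_term (app : PApp A) (u v x : A) :
    Term.eval app (Term.op (.op (.var 0) (.var 1)) (.var 2)) ![u, v, x]
      = (app u v).bind fun d => app d x := by
  simp [Term.eval]

lemma filt_nonempty (P : PCA A) : ∃ U, U ∈ P.filt := by
  obtain ⟨U, hU, -⟩ := P.complete 0 (.var 0)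
  exact ⟨U, hU⟩

lemma univ_mem_filt (P : PCA A) : (Set.univ : Set A) ∈ P.filt := by
  obtain ⟨U, hU⟩ := filt_nonempty P
  exact P.isFilter.upward U hU _ (Set.subset_univ U)

lemma exists_ireal (P : PCA A) :
    ∃ U ∈ P.filt, ∀ r ∈ U, ∀ a : A, P.app r a = some a := by
  obtain ⟨U, hU, hreal⟩ := P.complete 0 (.var 0)
  refine ⟨U, hU, fun r hr a => ?_⟩
  have h := (hreal r hr fun _ => a).2 a (by simp [Term.eval])
  simpa [appVec] using h

lemma realizes3_chain (P : PCA A) {T : Set A} {t : Term (2 + 1)}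
    (hreal : Realizes P.app T t) {r : A} (hr : r ∈ T) (u v : A) :
    ∃ s w, P.app r u = some s ∧ P.app s v = some w := by
  have h1 : ((P.app r u).bind fun s => P.app s v).isSome := by
    have h := (hreal r hr ![u, v, v]).1
    rwa [appVec_two_pre] at h
  cases hru : P.app r u with
  | none => rw [hru] at h1; simp at h1
  | some s =>
    rw [hru] at h1
    simp only [Option.bind_some] at h1
    obtain ⟨w, hw⟩ := Option.isSome_iff_exists.mp h1
    exact ⟨s, w, rfl, hw⟩

lemma exists_tracker3 (P : PCA A) (t : Term (2 + 1)) {U V : Set A}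
    (hU : U ∈ P.filt) (hV : V ∈ P.filt) :
    ∃ W ∈ P.filt, ∀ w ∈ W, ∃ u ∈ U, ∃ v ∈ V,
      ∀ x c : A, Term.eval P.app t ![u, v, x] = some c → P.app w x = some c := by
  obtain ⟨T, hT, hreal⟩ := P.complete 2 t
  have hdef1 : SubDef P.app T U := by
    intro r hr u _
    obtain ⟨s, w, hs, -⟩ := realizes3_chain P hreal hr u u
    simp [hs]
  have hTU := P.isFilter.appClosed T hT U hU hdef1
  have hdef2 : SubDef P.app (SubApp P.app T U) V := by
    rintro s ⟨r, hr, u, hu, hru⟩ v _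
    obtain ⟨s', w, hs', hw⟩ := realizes3_chain P hreal hr u v
    rw [hru] at hs'
    injection hs' with h
    subst h
    simp [hw]
  refine ⟨SubApp P.app (SubApp P.app T U) V,
    P.isFilter.appClosed _ hTU V hV hdef2, ?_⟩
  rintro w ⟨s, ⟨r, hr, u, hu, hru⟩, v, hv, hsv⟩
  refine ⟨u, hu, v, hv, fun x c hc => ?_⟩
  have h2 : appVec P.app r (2 + 1) ![u, v, x] = some c := (hreal r hr ![u, v, x]).2 c hc
  rw [appVec_three_cons, hru] at h2
  simp only [Option.bind_some] at h2
  rw [hsv] at h2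
  simpa using h2

/- ### Assemblies -/

/-- An assembly over a PCA `(A, φ)`. -/
structure Asm {A : Type} (P : PCA A) : Type 1 where
  carrier : Type
  E : carrier → A → Prop
  total : ∀ x, ∃ a, E x a

/-- `U` tracks the function `f` between (the carriers of) two assemblies. -/
def Tracks (P : PCA A) {X Y : Asm P} (U : Set A) (f : X.carrier → Y.carrier) : Prop :=
  ∀ x a r, X.E x a → r ∈ U → ∃ b, P.app r a = some b ∧ Y.E (f x) b

/-- The category of assemblies over a PCA. -/
instance asmCategory (P : PCA A) : Category (Asm P) where
  Hom X Y := {f : X.carrier → Y.carrier // ∃ U ∈ P.filt, Tracks P U f}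
  id X := ⟨fun x => x, by
    obtain ⟨U, hU, hI⟩ := exists_ireal P
    exact ⟨U, hU, fun x a r hx hr => ⟨a, hI r hr a, hx⟩⟩⟩
  comp {X Y Z} f g := ⟨fun x => g.1 (f.1 x), by
    obtain ⟨U, hU, hf⟩ := f.2
    obtain ⟨V, hV, hg⟩ := g.2
    obtain ⟨W, hW, hkey⟩ := exists_tracker3 P
      (Term.op (.var 1) (.op (.var 0) (.var 2))) hU hV
    refine ⟨W, hW, fun x a w hx hw => ?_⟩
    obtain ⟨u, hu, v, hv, key⟩ := hkey w hw
    obtain ⟨b, hb, hYb⟩ := hf x a u hx hu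
    obtain ⟨c, hc, hZc⟩ := hg (f.1 x) b v hYb hv
    refine ⟨c, key a c ?_, hZc⟩
    rw [eval_comp_term, hb]
    simpa using hc⟩
  id_comp f := Subtype.ext rfl
  comp_id f := Subtype.ext rfl
  assoc f g h := Subtype.ext rfl

/-- The global-sections-like functor `Γ : Asm(A,φ) ⥤ Set`. -/
def Gam (P : PCA A) : Asm P ⥤ Type where
  obj X := X.carrier
  map f := TypeCat.ofHom f.1
  map_id _ := rfl
  map_comp _ _ := rfl

/-- The constant-object assembly `∇ Y`. -/
def nablaObj (P : PCA A) (Y : Type) : Asm P where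
  carrier := Y
  E := fun _ _ => True
  total := fun _ => P.nonemptyCarrier.elim fun a => ⟨a, trivial⟩

/-- The functor `∇ : Set ⥤ Asm(A,φ)`. -/
def Nab (P : PCA A) : Type ⥤ Asm P where
  obj Y := nablaObj P Y
  map {Y Z} f := ⟨f, by
    obtain ⟨U, hU, hI⟩ := exists_ireal P
    exact ⟨U, hU, fun y a r _ hr => ⟨a, hI r hr a, trivial⟩⟩⟩
  map_id _ := Subtype.ext rfl
  map_comp _ _ := Subtype.ext rfl

/- ### Applicative morphisms -/

/-- The image of a subset under a relation. -/
def relImage (f : A → B → Prop) (V : Set A) : Set B :=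
  {b | ∃ a ∈ V, f a b}

/-- `U` tracks the relation `f` as an applicative (pre)morphism. -/
def Tracks₂ (appA : PApp A) (appB : PApp B) (U : Set B) (f : A → B → Prop) : Prop :=
  ∀ a a' c, appA a a' = some c → ∀ b b', f a b → f a' b' → ∀ r ∈ U,
    ∃ d e, appB r b = some d ∧ appB d b' = some e ∧ f c e

/-- `f ⊆ A × B` is an applicative morphism `(A,φ) → (B,ψ)`. -/
structure IsAppMor (appA : PApp A) (φ : Set (Set A)) (appB : PApp B) (ψ : Set (Set B))
    (f : A → B → Prop) : Prop where
  total : ∀ a, ∃ b, f a b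
  tracked : ∃ U ∈ ψ, Tracks₂ appA appB U f
  image : ∀ V ∈ φ, relImage f V ∈ ψ

/-- The preorder `f ≤ f'` on relations `A × B`, relative to `(B,ψ)`. -/
def RelLe (appB : PApp B) (ψ : Set (Set B)) (f f' : A → B → Prop) : Prop :=
  ∃ U ∈ ψ, ∀ a b, f a b → ∀ r ∈ U, ∃ c, appB r b = some c ∧ f' a c

/-- Relational composition: `(RelComp g f) a c ↔ ∃ b, f a b ∧ g b c`. -/
def RelComp (g : B → C → Prop) (f : A → B → Prop) : A → C → Prop :=
  fun a c => ∃ b, f a b ∧ g b c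

/-- The diagonal (identity) relation `δ_A`. -/
def relId (A : Type) : A → A → Prop := fun a b => a = b

/- ### The functor Asm(f) induced by an applicative morphism -/

/-- The action of an applicative morphism on an assembly. -/
def asmObj (P : PCA A) (Q : PCA B) (f : A → B → Prop) (htot : ∀ a, ∃ b, f a b)
    (X : Asm P) : Asm Q where
  carrier := X.carrier
  E := fun x b => ∃ a, X.E x a ∧ f a b
  total := fun x => by
    obtain ⟨a, ha⟩ := X.total x
    obtain ⟨b, hb⟩ := htot a
    exact ⟨b, a, ha, hb⟩

lemma tracks_asmMap {P : PCA A} {Q : PCA B} {f : A → B → Prop}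
    (hf : IsAppMor P.app P.filt Q.app Q.filt f) {X Y : Asm P}
    (g : X.carrier → Y.carrier) (hg : ∃ U ∈ P.filt, Tracks P U g) :
    ∃ W ∈ Q.filt,
      Tracks Q (X := asmObj P Q f hf.total X) (Y := asmObj P Q f hf.total Y) W g := by
  obtain ⟨U, hU, hgU⟩ := hg
  obtain ⟨T, hT, hfT⟩ := hf.tracked
  have hfU : relImage f U ∈ Q.filt := hf.image U hU
  obtain ⟨W, hW, hkey⟩ := exists_tracker3 Q
    (Term.op (.op (.var 0) (.var 1)) (.var 2)) hT hfU
  refine ⟨W, hW, ?_⟩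
  rintro x b w ⟨a, hxa, hab⟩ hw
  obtain ⟨v, hv, y, hy, key⟩ := hkey w hw
  obtain ⟨u, hu, huy⟩ := hy
  obtain ⟨a', ha', hEa'⟩ := hgU x a u hxa hu
  obtain ⟨d, e, hd, he, hfe⟩ := hfT u a a' ha' y b huy hab v hv
  refine ⟨e, key b e ?_, a', hEa', hfe⟩
  rw [eval_app2_term, hd]
  simpa using he

/-- The functor `Asm(f) : Asm(A,φ) ⥤ Asm(B,ψ)` induced by an applicative morphism. -/
def asmFunctor {P : PCA A} {Q : PCA B} {f : A → B → Prop}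
    (hf : IsAppMor P.app P.filt Q.app Q.filt f) : Asm P ⥤ Asm Q where
  obj X := asmObj P Q f hf.total X
  map {X Y} g := ⟨g.1, tracks_asmMap hf g.1 g.2⟩
  map_id _ := Subtype.ext rfl
  map_comp _ _ := Subtype.ext rfl
/- ### Products of PASs -/

/-- Coordinatewise partial application on `A × B`. -/
def prodApp (appA : PApp A) (appB : PApp B) : PApp (A × B) := fun p q =>
  (appA p.1 q.1).bind fun x => (appB p.2 q.2).bind fun y => some (x, y)

/-- The set `φ × ψ` of rectangles `U ×ˢ V` with `U ∈ φ` and `V ∈ ψ`. -/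
def prodFiltSet (φ : Set (Set A)) (ψ : Set (Set B)) : Set (Set (A × B)) :=
  {W | ∃ U ∈ φ, ∃ V ∈ ψ, W = U ×ˢ V}

/-- The filter `⟨φ × ψ⟩` of the pseudocoproduct of two PCAs. -/
def prodFilt (P : PCA A) (Q : PCA B) : Set (Set (A × B)) :=
  genFilter (prodApp P.app Q.app) (prodFiltSet P.filt Q.filt)

/- ### Quasi-surjectivity and computational density -/

/-- A quasi-surjective applicative morphism. -/
def QuasiSurjective (P : PCA A) (Q : PCA B) (f : A → B → Prop) : Prop :=
  ∃ N ∈ Q.filt, ∀ U ∈ Q.filt, ∃ V ∈ P.filt,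
    ∀ n ∈ N, ∀ b ∈ relImage f V, ∃ c, Q.app n b = some c ∧ c ∈ U

/-- A computationally dense applicative morphism. -/
def CompDense (P : PCA A) (Q : PCA B) (f : A → B → Prop) : Prop :=
  ∃ M ∈ Q.filt, ∀ U ∈ Q.filt, ∃ V ∈ P.filt,
    (∀ r ∈ V, ∀ a : A, (P.app r a).isSome) ∧
    (∀ r ∈ V, ∀ a a', P.app r a = some a' →
      (∀ u ∈ U, ∀ b, f a b → (Q.app u b).isSome) →
      ∀ m ∈ M, ∀ b', f a' b' →
        ∃ c, Q.app m b' = some c ∧ ∃ u ∈ U, ∃ b'', f a b'' ∧ Q.app u b'' = some c)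

/- ### Slicing: fiberwise filters over an assembly -/

/-- Fiberwise definedness of the application of two subsets of `I × A`. -/
def fibSubDef (app : PApp A) {I : Type} (U V : Set (I × A)) : Prop :=
  ∀ i r s, (i, r) ∈ U → (i, s) ∈ V → (app r s).isSome

/-- Fiberwise application of two subsets of `I × A`. -/
def fibSubApp (app : PApp A) {I : Type} (U V : Set (I × A)) : Set (I × A) :=
  {p | ∃ r s, (p.1, r) ∈ U ∧ (p.1, s) ∈ V ∧ app r s = some p.2}

/-- A fiberwise filter over `I`. -/
structure IsFibFilter (app : PApp A) (I : Type) (Ψ : Set (Set (I × A))) : Prop where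
  inhab : ∀ U ∈ Ψ, ∀ i : I, ∃ a, (i, a) ∈ U
  upward : ∀ U ∈ Ψ, ∀ V : Set (I × A), U ⊆ V → V ∈ Ψ
  appClosed : ∀ U ∈ Ψ, ∀ V ∈ Ψ, fibSubDef app U V → fibSubApp app U V ∈ Ψ

/-- The filter `φ_I` of the slice PCA over an assembly `I`: the least fiberwise filter
containing `E_I` and all sets `|I| × V` for `V ∈ φ`. -/
def sliceFilt (P : PCA A) (I : Asm P) : Set (Set (I.carrier × A)) :=
  ⋂₀ {Ψ | IsFibFilter P.app I.carrier Ψ ∧ {p : I.carrier × A | I.E p.1 p.2} ∈ Ψ ∧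
      ∀ V ∈ P.filt, {p : I.carrier × A | p.2 ∈ V} ∈ Ψ}

lemma sliceFilt_upward {P : PCA A} {I : Asm P} {U V : Set (I.carrier × A)}
    (hU : U ∈ sliceFilt P I) (hUV : U ⊆ V) : V ∈ sliceFilt P I := by
  rw [sliceFilt, Set.mem_sInter] at hU ⊢
  intro Ψ hΨ
  exact hΨ.1.upward U (hU Ψ hΨ) V hUV

lemma sliceFilt_appClosed {P : PCA A} {I : Asm P} {U V : Set (I.carrier × A)}
    (hU : U ∈ sliceFilt P I) (hV : V ∈ sliceFilt P I) (hdef : fibSubDef P.app U V) :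
    fibSubApp P.app U V ∈ sliceFilt P I := by
  rw [sliceFilt, Set.mem_sInter] at hU hV ⊢
  intro Ψ hΨ
  exact hΨ.1.appClosed U (hU Ψ hΨ) V (hV Ψ hΨ) hdef

lemma base_mem_sliceFilt {P : PCA A} {I : Asm P} {V : Set A} (hV : V ∈ P.filt) :
    {p : I.carrier × A | p.2 ∈ V} ∈ sliceFilt P I := by
  rw [sliceFilt, Set.mem_sInter]
  intro Ψ hΨ
  exact hΨ.2.2 V hV

lemma EI_mem_sliceFilt (P : PCA A) (I : Asm P) :
    {p : I.carrier × A | I.E p.1 p.2} ∈ sliceFilt P I := by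
  rw [sliceFilt, Set.mem_sInter]
  intro Ψ hΨ
  exact hΨ.2.1

lemma exists_fib_tracker3 (P : PCA A) (I : Asm P) (t : Term (2 + 1))
    {U V : Set (I.carrier × A)} (hU : U ∈ sliceFilt P I) (hV : V ∈ sliceFilt P I) :
    ∃ W ∈ sliceFilt P I, ∀ i w, (i, w) ∈ W → ∃ u v, (i, u) ∈ U ∧ (i, v) ∈ V ∧
      ∀ x c : A, Term.eval P.app t ![u, v, x] = some c → P.app w x = some c := by
  obtain ⟨T, hT, hreal⟩ := P.complete 2 t
  have hT' : {p : I.carrier × A | p.2 ∈ T} ∈ sliceFilt P I := base_mem_sliceFilt hT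
  have hdef1 : fibSubDef P.app {p : I.carrier × A | p.2 ∈ T} U := by
    intro i r s hr _
    obtain ⟨s', w', h1, -⟩ := realizes3_chain P hreal hr s s
    simp [h1]
  have h1mem := sliceFilt_appClosed hT' hU hdef1
  have hdef2 : fibSubDef P.app (fibSubApp P.app {p : I.carrier × A | p.2 ∈ T} U) V := by
    rintro i s v ⟨r, u, hr, hu, hru⟩ _
    obtain ⟨s', w', hs', hw'⟩ := realizes3_chain P hreal hr u v
    rw [hru] at hs'
    injection hs' with h
    subst h
    simp [hw']
  refine ⟨_, sliceFilt_appClosed h1mem hV hdef2, ?_⟩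
  rintro i w ⟨s, v, ⟨r, u, hr, hu, hru⟩, hv, hsv⟩
  refine ⟨u, v, hu, hv, fun x c hc => ?_⟩
  have h2 : appVec P.app r (2 + 1) ![u, v, x] = some c := (hreal r hr ![u, v, x]).2 c hc
  rw [appVec_three_cons, hru] at h2
  simp only [Option.bind_some] at h2
  rw [hsv] at h2
  simpa using h2

/- ### The category of assemblies over the slice PCA `(A,φ)/I` -/

/-- Assemblies over the slice PCA `(A,φ)/I`. -/
structure SliceAsm (P : PCA A) (I : Asm P) : Type 1 where
  carrier : Type
  k : carrier → I.carrier
  E : carrier → A → Prop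
  total : ∀ x, ∃ a, E x a

/-- Fiberwise tracking for morphisms of assemblies over `(A,φ)/I`. -/
def SliceTracks (P : PCA A) (I : Asm P) {X Y : SliceAsm P I} (U : Set (I.carrier × A))
    (f : X.carrier → Y.carrier) : Prop :=
  ∀ x a r, X.E x a → (X.k x, r) ∈ U → ∃ b, P.app r a = some b ∧ Y.E (f x) b

instance sliceAsmCategory (P : PCA A) (I : Asm P) : Category (SliceAsm P I) where
  Hom X Y := {f : X.carrier → Y.carrier //
    (∀ x, Y.k (f x) = X.k x) ∧ ∃ U ∈ sliceFilt P I, SliceTracks P I U f}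
  id X := ⟨fun x => x, fun _ => rfl, by
    obtain ⟨U, hU, hI⟩ := exists_ireal P
    exact ⟨{p | p.2 ∈ U}, base_mem_sliceFilt hU,
      fun x a r hx hr => ⟨a, hI r hr a, hx⟩⟩⟩
  comp {X Y Z} f g := ⟨fun x => g.1 (f.1 x), fun x => (g.2.1 (f.1 x)).trans (f.2.1 x), by
    obtain ⟨U, hU, hf⟩ := f.2.2
    obtain ⟨V, hV, hg⟩ := g.2.2
    obtain ⟨W, hW, hkey⟩ := exists_fib_tracker3 P I
      (Term.op (.var 1) (.op (.var 0) (.var 2))) hU hV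
    refine ⟨W, hW, fun x a w hx hw => ?_⟩
    obtain ⟨u, v, hu, hv, key⟩ := hkey (X.k x) w hw
    obtain ⟨b, hb, hYb⟩ := hf x a u hx hu
    have hv' : (Y.k (f.1 x), v) ∈ V := by rw [f.2.1 x]; exact hv
    obtain ⟨c, hc, hZc⟩ := hg (f.1 x) b v hYb hv'
    refine ⟨c, key a c ?_, hZc⟩
    rw [eval_comp_term, hb]
    simpa using hc⟩
  id_comp f := Subtype.ext rfl
  comp_id f := Subtype.ext rfl
  assoc f g h := Subtype.ext rfl

/- ### Families of assemblies (products of PCAs) -/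

/-- The category of families of assemblies over a family of PCAs, with uniformly
tracked families of morphisms; this is the category of assemblies over the product
PCA of the family, taken over the product of the base categories. -/
structure FamAsm {I : Type} {A : I → Type} (P : ∀ i, PCA (A i)) : Type 1 where
  obj : ∀ i, Asm (P i)

instance famAsmCategory {I : Type} {A : I → Type} (P : ∀ i, PCA (A i)) :
    Category (FamAsm P) where
  Hom X Y := {f : ∀ i, (X.obj i).carrier → (Y.obj i).carrier //
    ∃ U : ∀ i, Set (A i), (∀ i, U i ∈ (P i).filt) ∧ ∀ i, Tracks (P i) (U i) (f i)}
  id X := ⟨fun i x => x, by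
    choose U hU using fun i => exists_ireal (P i)
    exact ⟨U, fun i => (hU i).1, fun i x a r hx hr => ⟨a, (hU i).2 r hr a, hx⟩⟩⟩
  comp {X Y Z} f g := ⟨fun i x => g.1 i (f.1 i x), by
    obtain ⟨U, hU, hf⟩ := f.2
    obtain ⟨V, hV, hg⟩ := g.2
    choose W hW using fun i => exists_tracker3 (P i)
      (Term.op (.var 1) (.op (.var 0) (.var 2))) (hU i) (hV i)
    refine ⟨W, fun i => (hW i).1, fun i x a w hx hw => ?_⟩
    obtain ⟨u, hu, v, hv, key⟩ := (hW i).2 w hw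
    obtain ⟨b, hb, hYb⟩ := hf i x a u hx hu
    obtain ⟨c, hc, hZc⟩ := hg i (f.1 i x) b v hYb hv
    refine ⟨c, key a c ?_, hZc⟩
    rw [eval_comp_term, hb]
    simpa using hc⟩
  id_comp f := Subtype.ext rfl
  comp_id f := Subtype.ext rfl
  assoc f g h := Subtype.ext rfl

/-! Fix a filter `ψ` on `A × B` containing `G × H`, and take `K ∈ G` realizing `λxy.x` and
`R ∈ H` realizing `λxy.xy`. Since `(K × R)(U × V₁)(U × V₂) ⊆ U × V₁V₂`, the section
`{V | U × V ∈ ψ}` is a filter on `B` for every `U`; for `U ∈ G` it contains `H`, hence `⟨H⟩`.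
The same argument in the first coordinate then puts `⟨G⟩ × ⟨H⟩` inside `ψ`. -/

lemma subset_genFilter (app : PApp A) (G : Set (Set A)) : G ⊆ genFilter app G :=
  fun _ hU => Set.mem_sInter.2 fun _ hψ => hψ.2 hU

lemma genFilter_subset {app : PApp A} {G ψ : Set (Set A)} (hψ : IsPcaFilter app ψ)
    (hG : G ⊆ ψ) : genFilter app G ⊆ ψ :=
  fun _ hU => Set.mem_sInter.1 hU ψ ⟨hψ, hG⟩

lemma genFilter_subset_genFilter {app : PApp A} {G G' : Set (Set A)}
    (h : ∀ ψ, IsPcaFilter app ψ → G' ⊆ ψ → G ⊆ ψ) : genFilter app G ⊆ genFilter app G' :=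
  fun _ hU => Set.mem_sInter.2 fun ψ hψ => genFilter_subset hψ.1 (h ψ hψ.1 hψ.2) hU

lemma Realizes.bind_app_eq {app : PApp A} {K : Set A} {t : Term (1 + 1)}
    (hK : Realizes app K t) {k : A} (hk : k ∈ K) {a b c : A}
    (hc : t.eval app ![a, b] = some c) : (app k a).bind (app · b) = some c :=
  (hK k hk ![a, b]).2 c hc

lemma IsPcaFilter.mem_of_bind_app {app : PApp A} {φ : Set (Set A)} (hφ : IsPcaFilter app φ)
    {T U V W : Set A} (hT : T ∈ φ) (hU : U ∈ φ) (hV : V ∈ φ)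
    (h : ∀ r ∈ T, ∀ u ∈ U, ∀ v ∈ V, ∃ w ∈ W, (app r u).bind (app · v) = some w) : W ∈ φ := by
  obtain ⟨v₀, hv₀⟩ := hφ.nonempty V hV
  have hTU : SubDef app T U := fun r hr u hu => by
    obtain ⟨w, -, hw⟩ := h r hr u hu v₀ hv₀
    exact Option.isSome_of_isSome_bind (by rw [hw]; rfl)
  have hTUV : ∀ s ∈ SubApp app T U, ∀ v ∈ V, ∃ w ∈ W, app s v = some w := by
    rintro s ⟨r, hr, u, hu, hs⟩ v hv
    simpa [hs] using h r hr u hu v hv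
  refine hφ.upward _ (hφ.appClosed _ (hφ.appClosed T hT U hU hTU) V hV fun s hs v hv => ?_) W ?_
  · obtain ⟨w, -, hw⟩ := hTUV s hs v hv
    simp [hw]
  · rintro w ⟨s, hs, v, hv, hsv⟩
    obtain ⟨w', hw', hsv'⟩ := hTUV s hs v hv
    exact (Option.some_injective _ (hsv.symm.trans hsv')) ▸ hw'

lemma prodApp_bind_eq {appA : PApp A} {appB : PApp B} {p q q' : A × B} {a : A} {b : B}
    (ha : (appA p.1 q.1).bind (appA · q'.1) = some a)
    (hb : (appB p.2 q.2).bind (appB · q'.2) = some b) :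
    (prodApp appA appB p q).bind (prodApp appA appB · q') = some (a, b) := by
  obtain ⟨x, hx, hxa⟩ := Option.bind_eq_some_iff.1 ha
  obtain ⟨y, hy, hyb⟩ := Option.bind_eq_some_iff.1 hb
  simp [prodApp, hx, hy, hxa, hyb]

lemma IsPcaFilter.prod_mem_of_realizes {appA : PApp A} {appB : PApp B}
    {ψ : Set (Set (A × B))} (hψ : IsPcaFilter (prodApp appA appB) ψ)
    {K U₁ U₂ U : Set A} {R V₁ V₂ V : Set B} {tA : Term (1 + 1)} {tB : Term (1 + 1)}
    (hK : Realizes appA K tA) (hR : Realizes appB R tB) (hKR : K ×ˢ R ∈ ψ)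
    (h₁ : U₁ ×ˢ V₁ ∈ ψ) (h₂ : U₂ ×ˢ V₂ ∈ ψ)
    (htA : ∀ u₁ ∈ U₁, ∀ u₂ ∈ U₂, ∃ u ∈ U, tA.eval appA ![u₁, u₂] = some u)
    (htB : ∀ v₁ ∈ V₁, ∀ v₂ ∈ V₂, ∃ v ∈ V, tB.eval appB ![v₁, v₂] = some v) :
    U ×ˢ V ∈ ψ := by
  refine hψ.mem_of_bind_app hKR h₁ h₂ fun r hr p hp q hq => ?_
  obtain ⟨u, hu, hut⟩ := htA p.1 hp.1 q.1 hq.1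
  obtain ⟨v, hv, hvt⟩ := htB p.2 hp.2 q.2 hq.2
  exact ⟨(u, v), ⟨hu, hv⟩,
    prodApp_bind_eq (hK.bind_app_eq hr.1 hut) (hR.bind_app_eq hr.2 hvt)⟩

lemma eval_app_mem_subApp {app : PApp A} {U V : Set A} (h : SubDef app U V) :
    ∀ u ∈ U, ∀ v ∈ V, ∃ w ∈ SubApp app U V,
      (Term.op (.var 0) (.var 1) : Term (1 + 1)).eval app ![u, v] = some w := by
  intro u hu v hv
  obtain ⟨w, hw⟩ := Option.isSome_iff_exists.1 (h u hu v hv)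
  exact ⟨w, ⟨u, hu, v, hv, hw⟩, by simp [Term.eval, hw]⟩

lemma eval_var_zero_mem {app : PApp A} {U V : Set A} :
    ∀ u ∈ U, ∀ v ∈ V, ∃ w ∈ U, (Term.var 0 : Term (1 + 1)).eval app ![u, v] = some w :=
  fun u hu _ _ => ⟨u, hu, by simp [Term.eval]⟩

section Sections

variable {appA : PApp A} {appB : PApp B} {ψ : Set (Set (A × B))} {RA : Set A} {RB : Set B}

lemma IsPcaFilter.isPcaFilter_setOf_prod_mem_right (hψ : IsPcaFilter (prodApp appA appB) ψ)
    (hRA : Realizes appA RA (.var 0 : Term (1 + 1)))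
    (hRB : Realizes appB RB (.op (.var 0) (.var 1) : Term (1 + 1)))
    (hR : RA ×ˢ RB ∈ ψ) (U : Set A) : IsPcaFilter appB {V | U ×ˢ V ∈ ψ} where
  nonempty _ hV := (hψ.nonempty _ hV).snd
  upward _ hV _ hVV' := hψ.upward _ hV _ (Set.prod_mono subset_rfl hVV')
  appClosed _ h₁ _ h₂ hdef :=
    hψ.prod_mem_of_realizes hRA hRB hR h₁ h₂ eval_var_zero_mem (eval_app_mem_subApp hdef)

lemma IsPcaFilter.isPcaFilter_setOf_prod_mem_left (hψ : IsPcaFilter (prodApp appA appB) ψ)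
    (hRA : Realizes appA RA (.op (.var 0) (.var 1) : Term (1 + 1)))
    (hRB : Realizes appB RB (.var 0 : Term (1 + 1)))
    (hR : RA ×ˢ RB ∈ ψ) (V : Set B) : IsPcaFilter appA {U | U ×ˢ V ∈ ψ} where
  nonempty _ hU := (hψ.nonempty _ hU).fst
  upward _ hU _ hUU' := hψ.upward _ hU _ (Set.prod_mono hUU' subset_rfl)
  appClosed _ h₁ _ h₂ hdef :=
    hψ.prod_mem_of_realizes hRA hRB hR h₁ h₂ (eval_app_mem_subApp hdef) eval_var_zero_mem

end Sections

lemma prodFiltSet_genFilter_subset {appA : PApp A} {appB : PApp B}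
    {G : Set (Set A)} {H : Set (Set B)} (hG : CombComplete appA G) (hH : CombComplete appB H)
    {ψ : Set (Set (A × B))} (hψ : IsPcaFilter (prodApp appA appB) ψ)
    (hGH : prodFiltSet G H ⊆ ψ) : prodFiltSet (genFilter appA G) (genFilter appB H) ⊆ ψ := by
  obtain ⟨KA, hKA, hKA_real⟩ := hG 1 (.var 0)
  obtain ⟨RA, hRA, hRA_real⟩ := hG 1 (.op (.var 0) (.var 1))
  obtain ⟨KB, hKB, hKB_real⟩ := hH 1 (.var 0)
  obtain ⟨RB, hRB, hRB_real⟩ := hH 1 (.op (.var 0) (.var 1))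
  have hG_prod : ∀ U ∈ G, ∀ V ∈ genFilter appB H, U ×ˢ V ∈ ψ := fun U hU =>
    genFilter_subset
      (hψ.isPcaFilter_setOf_prod_mem_right hKA_real hRB_real (hGH ⟨KA, hKA, RB, hRB, rfl⟩) U)
      fun V hV => hGH ⟨U, hU, V, hV, rfl⟩
  rintro _ ⟨U, hU, V, hV, rfl⟩
  exact genFilter_subset
    (hψ.isPcaFilter_setOf_prod_mem_left hRA_real hKB_real (hGH ⟨RA, hRA, KB, hKB, rfl⟩) V)
    (fun U' hU' => hG_prod U' hU' V hV) hU

theorem statement6_general (A B : Type)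
    (appA : PApp A) (appB : PApp B) (G : Set (Set A)) (H : Set (Set B))
    (hG : CombComplete appA G) (hH : CombComplete appB H) :
    genFilter (prodApp appA appB) (prodFiltSet (genFilter appA G) (genFilter appB H)) =
      genFilter (prodApp appA appB) (prodFiltSet G H) := by
  refine subset_antisymm (genFilter_subset_genFilter fun ψ hψ hGH =>
    prodFiltSet_genFilter_subset hG hH hψ hGH) (genFilter_subset_genFilter fun ψ _ h => ?_)
  rintro _ ⟨U, hU, V, hV, rfl⟩
  exact h ⟨U, subset_genFilter _ _ hU, V, subset_genFilter _ _ hV, rfl⟩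

/-- For combinatorially complete sets `G`, `H` of nonempty subsets of PASs
`A`, `B`, the filters `⟨⟨G⟩ × ⟨H⟩⟩` and `⟨G × H⟩` on the product PAS `A × B` coincide. -/
theorem statement6 (A B : Type) (hA : Nonempty A) (hB : Nonempty B)
    (appA : PApp A) (appB : PApp B) (G : Set (Set A)) (H : Set (Set B))
    (hGne : ∀ U ∈ G, U.Nonempty) (hHne : ∀ V ∈ H, V.Nonempty)
    (hG : CombComplete appA G) (hH : CombComplete appB H) :
    genFilter (prodApp appA appB) (prodFiltSet (genFilter appA G) (genFilter appB H)) =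
      genFilter (prodApp appA appB) (prodFiltSet G H) :=
  statement6_general A B appA appB G H hG hH

end PcaPaper
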